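/- Two successive harmonic convolutions sum their rotation orders: if F = W_{m₁} ⊛ I and the first layer satisfies [W_{m₁} ⊛ I^{α,t}](x) = e^{i m₁ α} F(R_α x + t), then [W_{m₂} ⊛ (W_{m₁} ⊛ I^{α,t})](x) = e^{i(m₁+m₂)α}·[W_{m₂} ⊛ F](R_α x + t). -/
import Mathlib


open MeasureTheory

/-- Two successive harmonic convolutions sum their rotation orders: if the first
layer `F = W₁ ⊛ I` satisfies `[W₁ ⊛ I^{α,t}](x) = e^{i m₁ α} F(R_α x + t)` and `W₂`
is a harmonic filter of order `m₂` (`W₂(R_α⁻¹ z) = e^{i m₂ α} W₂ z`), then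
`[W₂ ⊛ (W₁ ⊛ I^{α,t})](x) = e^{i (m₁ + m₂) α} [W₂ ⊛ F](R_α x + t)`. -/
theorem harmonic_conv_conv_sums_orders
    (I W₁ W₂ : EuclideanSpace ℝ (Fin 2) → ℂ)
    (hI : Integrable I) (hW₁ : Integrable W₁) (hW₂ : Integrable W₂)
    (ρ : EuclideanSpace ℝ (Fin 2) ≃ₗᵢ[ℝ] EuclideanSpace ℝ (Fin 2))
    (t : EuclideanSpace ℝ (Fin 2)) (m₁ m₂ : ℤ) (α : ℝ)
    (F : EuclideanSpace ℝ (Fin 2) → ℂ)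
    (hF : F = fun x => ∫ z, W₁ z * I (x - z))
    (hlayer1 : ∀ x, (∫ z, W₁ z * I (ρ.symm (x - z) + t)) =
        Complex.exp (Complex.I * (m₁ : ℂ) * (α : ℂ)) * F (ρ x + t))
    (hWm₂ : ∀ z, W₂ (ρ.symm z) = Complex.exp (Complex.I * (m₂ : ℂ) * (α : ℂ)) * W₂ z)
    (x : EuclideanSpace ℝ (Fin 2)) :
    (∫ z, W₂ z * ∫ w, W₁ w * I (ρ.symm (x - z - w) + t)) =
      Complex.exp (Complex.I * ((m₁ : ℂ) + (m₂ : ℂ)) * (α : ℂ)) *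
        ∫ z, W₂ z * F (ρ x + t - z) := by
  have h1 : ∀ z : EuclideanSpace ℝ (Fin 2),
      (∫ w, W₁ w * I (ρ.symm (x - z - w) + t)) =
        Complex.exp (Complex.I * (m₁ : ℂ) * (α : ℂ)) * F (ρ x + t - ρ z) := by
    intro z
    have := hlayer1 (x - z)
    simpa [sub_sub, map_sub, sub_add_eq_add_sub] using this
  simp only [h1]
  have h2 : (∫ z, W₂ z * (Complex.exp (Complex.I * (m₁ : ℂ) * (α : ℂ)) *
      F (ρ x + t - ρ z))) = Complex.exp (Complex.I * (m₁ : ℂ) * (α : ℂ)) *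
      ∫ z, W₂ z * F (ρ x + t - ρ z) := by
    simp only [mul_left_comm (W₂ _)]
    exact integral_const_mul _ _
  rw [h2]
  have h3 : (∫ z, W₂ z * F (ρ x + t - ρ z)) =
      ∫ z, W₂ (ρ.symm z) * F (ρ x + t - z) := by
    have hmp : MeasurePreserving ρ (volume : Measure (EuclideanSpace ℝ (Fin 2))) volume :=
      ρ.measurePreserving
    rw [← hmp.integral_comp ρ.toHomeomorph.measurableEmbedding
      (fun z => W₂ (ρ.symm z) * F (ρ x + t - z))]
    simp
  rw [h3]
  simp only [hWm₂]
  have h4 : (∫ z, Complex.exp (Complex.I * (m₂ : ℂ) * (α : ℂ)) * W₂ z * F (ρ x + t - z)) =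
      Complex.exp (Complex.I * (m₂ : ℂ) * (α : ℂ)) * ∫ z, W₂ z * F (ρ x + t - z) := by
    simp_rw [mul_assoc]
    exact integral_const_mul _ _
  rw [h4, ← mul_assoc, ← Complex.exp_add]
  ring_nf
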